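/- arXiv:2011.06398 — 3 statements merged into one kernel-verified Lean document; each statement's English description precedes it below -/
import Mathlib

section
/- For any convex body K in Euclidean n-space, the X-ray number of K is at most the illumination number of K, and the illumination number of K is at most twice the X-ray number of K. -/
open RealInnerProductSpace

/-- A convex body in `E^n`: compact, convex, with nonempty interior. -/
def IsConvexBody {n : ℕ} (K : Set (EuclideanSpace ℝ (Fin n))) : Prop :=
  Convex ℝ K ∧ IsCompact K ∧ (interior K).Nonempty

/-- `E` illuminates `K`: every boundary point is illuminated along some direction in `E`. -/
def Illuminates {n : ℕ} (E K : Set (EuclideanSpace ℝ (Fin n))) : Prop :=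
  ∀ x ∈ frontier K, ∃ ξ ∈ E, ∃ t : ℝ, 0 ≤ t ∧ x + t • ξ ∈ interior K

/-- `E` X-rays `K`: every point of `K` is X-rayed along some direction in `E`. -/
def XRays {n : ℕ} (E K : Set (EuclideanSpace ℝ (Fin n))) : Prop :=
  ∀ x ∈ K, ∃ ξ ∈ E, ∃ t : ℝ, x + t • ξ ∈ interior K

/-- The illumination number of `K`. -/
noncomputable def illumNumber {n : ℕ} (K : Set (EuclideanSpace ℝ (Fin n))) : ℕ :=
  sInf {m : ℕ | ∃ E : Set (EuclideanSpace ℝ (Fin n)),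
    E.Finite ∧ E.ncard = m ∧ E ⊆ Metric.sphere (0 : EuclideanSpace ℝ (Fin n)) 1 ∧ Illuminates E K}

/-- The X-ray number of `K`. -/
noncomputable def xrayNumber {n : ℕ} (K : Set (EuclideanSpace ℝ (Fin n))) : ℕ :=
  sInf {m : ℕ | ∃ E : Set (EuclideanSpace ℝ (Fin n)),
    E.Finite ∧ E.ncard = m ∧ E ⊆ Metric.sphere (0 : EuclideanSpace ℝ (Fin n)) 1 ∧ XRays E K}

theorem xray_le_illum_le_two_xray {n : ℕ} (K : Set (EuclideanSpace ℝ (Fin n)))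
    (hK : IsConvexBody K) :
    xrayNumber K ≤ illumNumber K ∧ illumNumber K ≤ 2 * xrayNumber K := by
  obtain ⟨hconv, hcpt, hint⟩ := hK
  set IS := {m : ℕ | ∃ E : Set (EuclideanSpace ℝ (Fin n)),
    E.Finite ∧ E.ncard = m ∧ E ⊆ Metric.sphere (0 : EuclideanSpace ℝ (Fin n)) 1 ∧
    Illuminates E K} with hIS
  set XS := {m : ℕ | ∃ E : Set (EuclideanSpace ℝ (Fin n)),
    E.Finite ∧ E.ncard = m ∧ E ⊆ Metric.sphere (0 : EuclideanSpace ℝ (Fin n)) 1 ∧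
    XRays E K} with hXS
  have hKcl : IsClosed K := hcpt.isClosed
  rcases Nat.eq_zero_or_pos n with hn | hn
  · -- trivial space: both numbers are 0
    subst hn
    have hsub : Subsingleton (EuclideanSpace ℝ (Fin 0)) := by
      constructor; intro a b; ext i; exact absurd i.2 (Nat.not_lt_zero _)
    have hfr : frontier K = ∅ := by
      have : K = Set.univ := by
        obtain ⟨x, hx⟩ := hint
        apply Set.eq_univ_of_forall
        intro y
        have : y = x := hsub.elim y x
        rw [this]; exact interior_subset hx
      rw [this]; simp
    have h0 : (0 : ℕ) ∈ IS := by
      refine ⟨∅, Set.finite_empty, by simp, by simp, ?_⟩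
      intro x hx; rw [hfr] at hx; exact absurd hx (Set.notMem_empty x)
    have hille : illumNumber K = 0 := Nat.eq_zero_of_le_zero (Nat.sInf_le h0)
    have hxre : xrayNumber K = 0 := by
      have : XS = ∅ := by
        ext m; simp only [Set.mem_empty_iff_false, iff_false, hXS, Set.mem_setOf_eq]
        rintro ⟨E, _, _, hEs, _⟩
        -- sphere of radius 1 is empty in the trivial space, so E = ∅, but K nonempty needs a direction
        obtain ⟨x, hx⟩ := hint
        obtain ⟨ξ, hξE, _⟩ := ‹XRays E K› x (interior_subset hx)
        have := hEs hξE
        simp only [Metric.mem_sphere] at this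
        have hz : ξ = 0 := hsub.elim ξ 0
        rw [hz] at this
        simp at this
      show sInf XS = 0
      rw [this]; exact Nat.sInf_empty
    rw [hille, hxre]; exact ⟨le_refl 0, by norm_num⟩
  · -- n ≥ 1 : space is nontrivial
    have hnt : Nontrivial (EuclideanSpace ℝ (Fin n)) := by
      refine ⟨0, EuclideanSpace.single ⟨0, hn⟩ 1, ?_⟩
      intro h
      have := congrArg (fun f => f ⟨0, hn⟩) h
      simp [EuclideanSpace.single_apply] at this
    have hKne : K ≠ Set.univ := by
      intro h
      have : Bornology.IsBounded (Set.univ : Set (EuclideanSpace ℝ (Fin n))) := by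
        rw [← h]; exact hcpt.isBounded
      exact NormedSpace.unbounded_univ ℝ (EuclideanSpace ℝ (Fin n)) this
    have hfr : (frontier K).Nonempty := by
      rw [nonempty_frontier_iff]
      exact ⟨hint.mono interior_subset, hKne⟩
    -- illumination implies X-raying
    have key1 : ∀ E : Set (EuclideanSpace ℝ (Fin n)), Illuminates E K → XRays E K := by
      intro E hE x hx
      obtain ⟨x0, hx0⟩ := hfr
      obtain ⟨ξ0, hξ0, _⟩ := hE x0 hx0
      by_cases hxi : x ∈ interior K
      · exact ⟨ξ0, hξ0, 0, by simpa using hxi⟩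
      · have : x ∈ frontier K := by
          rw [hKcl.frontier_eq]; exact ⟨hx, hxi⟩
        obtain ⟨ξ, hξ, t, _, ht⟩ := hE x this
        exact ⟨ξ, hξ, t, ht⟩
    -- X-raying implies E ∪ -E illuminates
    have key2 : ∀ E : Set (EuclideanSpace ℝ (Fin n)), XRays E K →
        Illuminates (E ∪ (-E)) K := by
      intro E hE x hx
      have hxK : x ∈ K := hKcl.frontier_subset hx
      obtain ⟨ξ, hξ, t, ht⟩ := hE x hxK
      rcases le_or_gt 0 t with h | h
      · exact ⟨ξ, Or.inl hξ, t, h, ht⟩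
      · refine ⟨-ξ, Or.inr (by simpa using hξ), -t, by linarith, ?_⟩
        simpa using ht
    have hmono : IS.Nonempty → XS.Nonempty := by
      rintro ⟨m, E, hf, hc, hs, hI⟩
      exact ⟨m, E, hf, hc, hs, key1 E hI⟩
    constructor
    · -- xrayNumber ≤ illumNumber
      by_cases hne : IS.Nonempty
      · obtain ⟨E, hf, hc, hs, hI⟩ := Nat.sInf_mem hne
        exact Nat.sInf_le ⟨E, hf, hc, hs, key1 E hI⟩
      · show xrayNumber K ≤ sInf IS
        rw [Set.not_nonempty_iff_eq_empty.mp hne, Nat.sInf_empty]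
        have : XS = ∅ := by
          rw [Set.not_nonempty_iff_eq_empty] at hne
          by_contra h
          obtain ⟨m, E, hf, hc, hs, hX⟩ := Set.nonempty_iff_ne_empty.mpr h
          have : (E ∪ (-E)).ncard ∈ IS := by
            refine ⟨E ∪ (-E), hf.union hf.neg, rfl, ?_, key2 E hX⟩
            rintro ξ (h | h)
            · exact hs h
            · rw [Set.mem_neg] at h
              have := hs h
              simp only [Metric.mem_sphere, dist_zero_right] at this ⊢
              rw [← norm_neg]; simpa using this
          rw [hne] at this; exact this
        show sInf XS ≤ 0
        rw [this, Nat.sInf_empty]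
    · -- illumNumber ≤ 2 * xrayNumber
      by_cases hne : XS.Nonempty
      · obtain ⟨E, hf, hc, hs, hX⟩ := Nat.sInf_mem hne
        have hmem : (E ∪ (-E)).ncard ∈ IS := by
          refine ⟨E ∪ (-E), hf.union hf.neg, rfl, ?_, key2 E hX⟩
          rintro ξ (h | h)
          · exact hs h
          · rw [Set.mem_neg] at h
            have := hs h
            simp only [Metric.mem_sphere, dist_zero_right] at this ⊢
            rw [← norm_neg]; simpa using this
        calc illumNumber K ≤ (E ∪ (-E)).ncard := Nat.sInf_le hmem
          _ ≤ E.ncard + (-E : Set _).ncard := Set.ncard_union_le _ _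
          _ ≤ E.ncard + E.ncard := by
              have heq : (-E : Set _) = (fun x => -x) '' E := by
                ext y; simp only [Set.mem_neg, Set.mem_image]
                constructor
                · intro h; exact ⟨-y, h, by simp⟩
                · rintro ⟨z, hz, rfl⟩; simpa using hz
              have h1 : (-E : Set _).ncard ≤ E.ncard := by
                rw [heq]; exact Set.ncard_image_le hf
              exact Nat.add_le_add_left h1 _
          _ = 2 * xrayNumber K := by
              have h2 : xrayNumber K = sInf XS := rfl
              rw [hc, h2]; ring
      · have : IS = ∅ := by
          rw [Set.not_nonempty_iff_eq_empty] at hne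
          by_contra h
          obtain ⟨m, hm⟩ := hmono (Set.nonempty_iff_ne_empty.mpr h)
          rw [hne] at hm; exact hm
        show sInf IS ≤ 2 * xrayNumber K
        rw [this, Nat.sInf_empty]
        exact Nat.zero_le _
end

section
/- Let A be a finite subset of the unit sphere S^{n-1} in E^n such that the origin lies in the interior of K = conv(A). Then the covering radius of A equals arccos(1/λ), where λ = max{‖x‖ : x is a vertex (extreme point) of the polar body K°}. -/
open RealInnerProductSpace

/-- The polar of a set. -/
def polarSet {n : ℕ} (K : Set (EuclideanSpace ℝ (Fin n))) : Set (EuclideanSpace ℝ (Fin n)) :=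
  {x | ∀ y ∈ K, ⟪x, y⟫ ≤ 1}

/-- The caps of angular radius `r` centered at points of `A` cover the unit sphere. -/
def Covers {n : ℕ} (A : Set (EuclideanSpace ℝ (Fin n))) (r : ℝ) : Prop :=
  ∀ x ∈ Metric.sphere (0 : EuclideanSpace ℝ (Fin n)) 1, ∃ a ∈ A, Real.arccos ⟪x, a⟫ ≤ r

/-- The covering radius of `A`: the smallest `r > 0` such that caps of radius `r`
centered at `A` cover the sphere. -/
noncomputable def covRadius {n : ℕ} (A : Set (EuclideanSpace ℝ (Fin n))) : ℝ :=
  sInf {r : ℝ | 0 < r ∧ Covers A r}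

private lemma arccos_anti {x y : ℝ} (h : x ≤ y) : Real.arccos y ≤ Real.arccos x := by
  simp only [Real.arccos]
  exact sub_le_sub_left (Real.monotone_arcsin h) _

theorem covRadius_eq_arccos_inv_max_norm_extreme {n : ℕ}
    (A : Set (EuclideanSpace ℝ (Fin n))) (hA : A.Finite)
    (hAs : A ⊆ Metric.sphere (0 : EuclideanSpace ℝ (Fin n)) 1)
    (h0 : (0 : EuclideanSpace ℝ (Fin n)) ∈ interior (convexHull ℝ A))
    (lam : ℝ)
    (hlam : IsGreatest (norm '' (Set.extremePoints ℝ (polarSet (convexHull ℝ A)))) lam) :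
    covRadius A = Real.arccos lam⁻¹ := by
  classical
  -- Dispose of the degenerate case `n = 0`.
  rcases Nat.eq_zero_or_pos n with hn | hn
  · exfalso
    subst hn
    have hAe : A = ∅ := by
      ext x
      simp only [Set.mem_empty_iff_false, iff_false]
      intro hx
      have := hAs hx
      have hx0 : x = 0 := Subsingleton.elim x 0
      rw [hx0] at this
      simp at this
    rw [hAe] at h0
    simp [convexHull_empty] at h0
  set K : Set (EuclideanSpace ℝ (Fin n)) := convexHull ℝ A with hK
  set P : Set (EuclideanSpace ℝ (Fin n)) := polarSet K with hP
  have hKA : A ⊆ K := subset_convexHull ℝ A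
  -- membership in the polar via `A`
  have hmemP : ∀ y : EuclideanSpace ℝ (Fin n), y ∈ P ↔ ∀ a ∈ A, ⟪y, a⟫ ≤ 1 := by
    intro y
    constructor
    · intro hy a ha; exact hy a (hKA ha)
    · intro hy z hz
      have hsub : K ⊆ {w : EuclideanSpace ℝ (Fin n) | ⟪y, w⟫ ≤ 1} := by
        apply convexHull_min hy
        exact convex_halfSpace_le ⟨fun a b => inner_add_right y a b,
          fun c a => real_inner_smul_right y a c⟩ 1
      exact hsub hz
  -- a small ball around the origin inside `K`
  obtain ⟨ε, hε, hball⟩ : ∃ ε > 0, Metric.ball (0 : EuclideanSpace ℝ (Fin n)) ε ⊆ K := by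
    obtain ⟨ε, hε, hb⟩ := Metric.mem_nhds_iff.mp
      ((mem_interior_iff_mem_nhds).mp h0)
    exact ⟨ε, hε, hb⟩
  -- max of the linear functional over `K` is attained on `A`
  have hAne : A.Nonempty := by
    rw [← convexHull_nonempty_iff (𝕜 := ℝ)]
    exact ⟨0, interior_subset h0⟩
  have hmaxK : ∀ x : EuclideanSpace ℝ (Fin n), ∃ a ∈ A,
      (∀ b ∈ A, ⟪x, b⟫ ≤ ⟪x, a⟫) ∧ ∀ z ∈ K, ⟪x, z⟫ ≤ ⟪x, a⟫ := by
    intro x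
    obtain ⟨a, haA, hamax⟩ := Set.exists_max_image A (fun a => ⟪x, a⟫) hA hAne
    refine ⟨a, haA, hamax, ?_⟩
    intro z hz
    have hsub : K ⊆ {w : EuclideanSpace ℝ (Fin n) | ⟪x, w⟫ ≤ ⟪x, a⟫} := by
      apply convexHull_min hamax
      exact convex_halfSpace_le ⟨fun u v => inner_add_right x u v,
        fun c u => real_inner_smul_right x u c⟩ _
    exact hsub hz
  -- `P` is bounded
  have hPbound : ∀ y ∈ P, ‖y‖ ≤ 2 / ε := by
    intro y hy
    rcases eq_or_ne y 0 with rfl | hy0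
    · simp; positivity
    · have hny : (0:ℝ) < ‖y‖ := norm_pos_iff.mpr hy0
      set z : EuclideanSpace ℝ (Fin n) := (ε / 2 / ‖y‖) • y with hz
      have hzK : z ∈ K := by
        apply hball
        simp only [Metric.mem_ball, dist_zero_right, hz, norm_smul]
        rw [Real.norm_eq_abs, abs_of_pos (by positivity)]
        rw [div_mul_cancel₀ _ (ne_of_gt hny)]
        linarith
      have h1 : ⟪y, z⟫ ≤ 1 := hy z hzK
      rw [hz, real_inner_smul_right, real_inner_self_eq_norm_sq] at h1
      have : ε / 2 / ‖y‖ * ‖y‖ ^ 2 = ε / 2 * ‖y‖ := by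
        field_simp
      rw [this] at h1
      rw [le_div_iff₀ hε]
      nlinarith
  have hPclosed : IsClosed P := by
    have : P = ⋂ z ∈ K, {x : EuclideanSpace ℝ (Fin n) | ⟪x, z⟫ ≤ 1} := by
      ext x; simp [hP, polarSet, Set.mem_iInter]
    rw [this]
    exact isClosed_biInter fun z _ =>
      isClosed_le (Continuous.inner continuous_id continuous_const) continuous_const
  have hPconv : Convex ℝ P := by
    have : P = ⋂ z ∈ K, {x : EuclideanSpace ℝ (Fin n) | ⟪x, z⟫ ≤ 1} := by
      ext x; simp [hP, polarSet, Set.mem_iInter]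
    rw [this]
    exact convex_iInter₂ fun z _ =>
      convex_halfSpace_le ⟨fun u v => inner_add_left u v z,
        fun c u => real_inner_smul_left u z c⟩ 1
  have hPcompact : IsCompact P :=
    Metric.isCompact_of_isClosed_isBounded hPclosed
      (isBounded_iff_forall_norm_le.mpr ⟨2 / ε, hPbound⟩)
  -- every point of `P` has norm at most `lam`
  have hnormP : ∀ y ∈ P, ‖y‖ ≤ lam := by
    have hKM := closure_convexHull_extremePoints hPcompact hPconv
    intro y hy
    rw [← hKM] at hy
    have hCc : IsClosed {x : EuclideanSpace ℝ (Fin n) | ‖x‖ ≤ lam} :=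
      isClosed_le continuous_norm continuous_const
    have hsub : convexHull ℝ (Set.extremePoints ℝ P) ⊆
        {x : EuclideanSpace ℝ (Fin n) | ‖x‖ ≤ lam} := by
      apply convexHull_min
      · intro x hx
        exact hlam.2 ⟨x, hx, rfl⟩
      · convert convex_closedBall (0 : EuclideanSpace ℝ (Fin n)) lam using 1
        ext x; simp [Metric.mem_closedBall]
    have := closure_minimal hsub hCc hy
    exact this
  -- the extreme point of maximal norm
  obtain ⟨e, heE, heN⟩ := hlam.1
  have heP : e ∈ P := extremePoints_subset heE
  -- `1 ≤ lam`
  have hlam1 : (1:ℝ) ≤ lam := by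
    set u : EuclideanSpace ℝ (Fin n) := EuclideanSpace.single ⟨0, hn⟩ (1:ℝ) with hu
    have hun : ‖u‖ = 1 := by simp [hu, EuclideanSpace.norm_single]
    have huP : u ∈ P := by
      rw [hmemP]
      intro a ha
      have hna : ‖a‖ = 1 := by
        have := hAs ha; simpa [mem_sphere_zero_iff_norm] using this
      calc ⟪u, a⟫ ≤ ‖u‖ * ‖a‖ := real_inner_le_norm u a
        _ = 1 := by rw [hun, hna]; ring
    have := hnormP u huP
    rwa [hun] at this
  have hlampos : (0:ℝ) < lam := lt_of_lt_of_le one_pos hlam1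
  -- key support lower bound
  have hsupp : ∀ x : EuclideanSpace ℝ (Fin n), ‖x‖ = 1 → ∃ a ∈ A, lam⁻¹ ≤ ⟪x, a⟫ := by
    intro x hx
    obtain ⟨a, haA, hamax, hKmax⟩ := hmaxK x
    refine ⟨a, haA, ?_⟩
    set c : ℝ := ⟪x, a⟫ with hc
    have hcpos : 0 < c := by
      have hxK : (ε / 2) • x ∈ K := by
        apply hball
        simp only [Metric.mem_ball, dist_zero_right, norm_smul, Real.norm_eq_abs,
          abs_of_pos (by positivity : (0:ℝ) < ε / 2), hx]
        linarith
      have := hKmax _ hxK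
      rw [real_inner_smul_right, real_inner_self_eq_norm_sq, hx] at this
      nlinarith
    have hyP : c⁻¹ • x ∈ P := by
      rw [hmemP]
      intro b hb
      rw [real_inner_smul_left]
      have := hamax b hb
      calc c⁻¹ * ⟪x, b⟫ ≤ c⁻¹ * c := by
            apply mul_le_mul_of_nonneg_left _ (by positivity)
            exact this
        _ = 1 := inv_mul_cancel₀ (ne_of_gt hcpos)
    have hn1 : ‖c⁻¹ • x‖ = c⁻¹ := by
      rw [norm_smul, Real.norm_eq_abs, abs_of_pos (by positivity), hx, mul_one]
    have := hnormP _ hyP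
    rw [hn1] at this
    exact inv_le_of_inv_le₀ hcpos this
  -- covering at radius `arccos lam⁻¹`
  have hcov : Covers A (Real.arccos lam⁻¹) := by
    intro x hx
    have hxn : ‖x‖ = 1 := by simpa [mem_sphere_zero_iff_norm] using hx
    obtain ⟨a, haA, hale⟩ := hsupp x hxn
    exact ⟨a, haA, arccos_anti hale⟩
  -- monotonicity of `Covers`
  have hcovmono : ∀ r, Real.arccos lam⁻¹ ≤ r → Covers A r := by
    intro r hr x hx
    obtain ⟨a, haA, ha⟩ := hcov x hx
    exact ⟨a, haA, ha.trans hr⟩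
  -- lower bound for any covering radius
  have hlb : ∀ r, Covers A r → Real.arccos lam⁻¹ ≤ r := by
    intro r hr
    set x : EuclideanSpace ℝ (Fin n) := lam⁻¹ • e with hx
    have hxn : ‖x‖ = 1 := by
      rw [hx, norm_smul, Real.norm_eq_abs, abs_of_pos (by positivity), heN]
      exact inv_mul_cancel₀ (ne_of_gt hlampos)
    obtain ⟨a, haA, har⟩ := hr x (by simpa [mem_sphere_zero_iff_norm] using hxn)
    have hle : ⟪x, a⟫ ≤ lam⁻¹ := by
      rw [hx, real_inner_smul_left]
      have h1 : ⟪e, a⟫ ≤ 1 := heP a (hKA haA)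
      calc lam⁻¹ * ⟪e, a⟫ ≤ lam⁻¹ * 1 :=
            mul_le_mul_of_nonneg_left h1 (by positivity)
        _ = lam⁻¹ := mul_one _
    exact le_trans (arccos_anti hle) har
  -- conclude
  unfold covRadius
  apply le_antisymm
  · -- `sInf ≤ arccos lam⁻¹`
    have hsubset : Set.Ioi (Real.arccos lam⁻¹) ⊆ {r : ℝ | 0 < r ∧ Covers A r} := by
      intro r hr
      have hr' : Real.arccos lam⁻¹ < r := hr
      exact ⟨lt_of_le_of_lt (Real.arccos_nonneg _) hr', hcovmono r hr'.le⟩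
    have hbdd : BddBelow {r : ℝ | 0 < r ∧ Covers A r} :=
      ⟨0, fun r hr => hr.1.le⟩
    calc sInf {r : ℝ | 0 < r ∧ Covers A r} ≤ sInf (Set.Ioi (Real.arccos lam⁻¹)) :=
          csInf_le_csInf hbdd ⟨Real.arccos lam⁻¹ + 1, by simp⟩ hsubset
      _ = Real.arccos lam⁻¹ := csInf_Ioi
  · apply le_csInf
    · exact ⟨Real.arccos lam⁻¹ + 1,
        lt_of_le_of_lt (Real.arccos_nonneg _) (lt_add_one _),
        hcovmono _ (by linarith [Real.arccos_nonneg lam⁻¹])⟩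
    · intro r hr
      exact hlb r hr.2
end

section
/- Let T be a finite subset of the orthogonal group O(n), let ⟨T⟩ be the subgroup it generates, and let C ⊆ E^n satisfy ⋃{T(C) : T ∈ ⟨T⟩} = E^n. Let A ⊆ S^{n-1} be finite with the origin in the interior of K = conv(A) and with T(A) = A for every T ∈ T. Then max{‖x‖ : x ∈ ext(K°)} = max{‖x‖ : x ∈ C ∩ ext(K°)}, and hence the covering radius of A equals arccos((max{‖x‖ : x ∈ C ∩ ext(K°)})^{-1}). -/
open RealInnerProductSpace

lemma arccos_antitone' : Antitone Real.arccos := fun a b hab => by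
  simp only [Real.arccos_eq_pi_div_two_sub_arcsin]
  exact sub_le_sub_left (Real.monotone_arcsin hab) _

lemma isLinearMap_inner_right {n : ℕ} (x : EuclideanSpace ℝ (Fin n)) :
    IsLinearMap ℝ (fun y : EuclideanSpace ℝ (Fin n) => ⟪x, y⟫) :=
  ⟨fun a b => inner_add_right x a b, fun r a => real_inner_smul_right x a r⟩

lemma mem_polarSet_iff {n : ℕ} (A : Set (EuclideanSpace ℝ (Fin n)))
    (x : EuclideanSpace ℝ (Fin n)) :
    x ∈ polarSet (convexHull ℝ A) ↔ ∀ a ∈ A, ⟪x, a⟫ ≤ 1 := by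
  constructor
  · intro hx a ha; exact hx a (subset_convexHull ℝ A ha)
  · intro hx y hy
    have hconv : Convex ℝ {y : EuclideanSpace ℝ (Fin n) | ⟪x, y⟫ ≤ 1} :=
      convex_halfSpace_le (isLinearMap_inner_right x) 1
    exact convexHull_min hx hconv hy

theorem covRadius_eq_arccos_inv_max_norm_extreme_in_fundamental_domain {n : ℕ}
    (𝒯 : Set (EuclideanSpace ℝ (Fin n) ≃ₗᵢ[ℝ] EuclideanSpace ℝ (Fin n))) (h𝒯 : 𝒯.Finite)
    (C : Set (EuclideanSpace ℝ (Fin n)))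
    (hC : ⋃ T ∈ Subgroup.closure 𝒯, (T : EuclideanSpace ℝ (Fin n) ≃ₗᵢ[ℝ]
      EuclideanSpace ℝ (Fin n)) '' C = Set.univ)
    (A : Set (EuclideanSpace ℝ (Fin n))) (hA : A.Finite)
    (hAs : A ⊆ Metric.sphere (0 : EuclideanSpace ℝ (Fin n)) 1)
    (h0 : (0 : EuclideanSpace ℝ (Fin n)) ∈ interior (convexHull ℝ A))
    (hinv : ∀ T ∈ 𝒯, T '' A = A)
    (lam : ℝ)
    (hlam : IsGreatest
      (norm '' (C ∩ Set.extremePoints ℝ (polarSet (convexHull ℝ A)))) lam) :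
    IsGreatest (norm '' Set.extremePoints ℝ (polarSet (convexHull ℝ A))) lam ∧
      covRadius A = Real.arccos lam⁻¹ := by
  classical
  set K := convexHull ℝ A with hKdef
  set P := polarSet K with hPdef
  -- A is nonempty
  have hA_ne : A.Nonempty := by
    by_contra h
    rw [Set.not_nonempty_iff_eq_empty] at h
    rw [h, convexHull_empty] at hKdef
    rw [hKdef] at h0
    simp at h0
  have hmem : ∀ x : EuclideanSpace ℝ (Fin n), x ∈ P ↔ ∀ a ∈ A, ⟪x, a⟫ ≤ 1 := mem_polarSet_iff A
  have hnorm1 : ∀ a ∈ A, ‖a‖ = 1 := fun a ha => mem_sphere_zero_iff_norm.1 (hAs ha)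
  have hAP : A ⊆ P := fun a ha => (hmem a).2 fun b hb => by
    calc ⟪a, b⟫ ≤ ‖a‖ * ‖b‖ := real_inner_le_norm a b
    _ = 1 := by rw [hnorm1 a ha, hnorm1 b hb]; ring
  -- a small ball inside K
  obtain ⟨ε, hε, hball⟩ : ∃ ε > 0, Metric.ball (0 : EuclideanSpace ℝ (Fin n)) ε ⊆ K :=
    Metric.mem_nhds_iff.1 (mem_interior_iff_mem_nhds.1 h0)
  -- P is closed
  have hPclosed : IsClosed P := by
    have : P = ⋂ y ∈ K, {x : EuclideanSpace ℝ (Fin n) | ⟪x, y⟫ ≤ 1} := by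
      ext x
      simp only [Set.mem_iInter, Set.mem_setOf_eq]
      exact Iff.rfl
    rw [this]
    exact isClosed_biInter fun y _ =>
      isClosed_le (Continuous.inner continuous_id continuous_const) continuous_const
  -- P is convex
  have hPconvex : Convex ℝ P := by
    intro x hx y hy a b ha hb hab z hz
    have h1 := hx z hz
    have h2 := hy z hz
    rw [inner_add_left, real_inner_smul_left, real_inner_smul_left]
    nlinarith
  -- P is bounded
  have hPsub : P ⊆ Metric.closedBall 0 (2 / ε) := by
    intro x hx
    rw [Metric.mem_closedBall, dist_zero_right]
    rcases eq_or_ne x 0 with rfl | hx0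
    · simp; positivity
    · have hxn : 0 < ‖x‖ := norm_pos_iff.2 hx0
      have hyK : (ε / 2) • ‖x‖⁻¹ • x ∈ K := by
        apply hball
        rw [Metric.mem_ball, dist_zero_right, norm_smul, norm_smul, norm_inv, norm_norm,
          Real.norm_eq_abs, abs_of_pos (by positivity : (0:ℝ) < ε / 2)]
        rw [inv_mul_cancel₀ hxn.ne']
        linarith
      have hle := hx _ hyK
      rw [real_inner_smul_right, real_inner_smul_right, real_inner_self_eq_norm_sq] at hle
      have : ε / 2 * (‖x‖⁻¹ * ‖x‖ ^ 2) = ε / 2 * ‖x‖ := by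
        field_simp
      rw [this] at hle
      rw [le_div_iff₀ hε]
      linarith
  have hPcompact : IsCompact P :=
    (isCompact_closedBall (0 : EuclideanSpace ℝ (Fin n)) (2 / ε)).of_isClosed_subset hPclosed hPsub
  -- invariance of A under the closure
  have hTA : ∀ T ∈ Subgroup.closure 𝒯, T '' A = A := by
    intro T hT
    induction hT using Subgroup.closure_induction with
    | mem x hx => exact hinv x hx
    | one => rw [LinearIsometryEquiv.coe_one, Set.image_id]
    | mul x y hx hy ihx ihy => rw [LinearIsometryEquiv.coe_mul, Set.image_comp, ihy, ihx]
    | inv x hx ih =>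
        rw [LinearIsometryEquiv.coe_inv]
        calc x.symm '' A = x.symm '' (x '' A) := by rw [ih]
        _ = A := by rw [← Set.image_comp]; simp
  -- invariance of P
  have hTP : ∀ T ∈ Subgroup.closure 𝒯, ∀ x : EuclideanSpace ℝ (Fin n), T x ∈ P ↔ x ∈ P := by
    intro T hT x
    rw [hmem, hmem]
    constructor
    · intro h a ha
      have hTa : T a ∈ A := (hTA T hT) ▸ Set.mem_image_of_mem T ha
      have := h (T a) hTa
      rwa [LinearIsometryEquiv.inner_map_map] at this
    · intro h a ha
      rw [← hTA T hT] at ha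
      obtain ⟨b, hb, rfl⟩ := ha
      rw [LinearIsometryEquiv.inner_map_map]
      exact h b hb
  have hTPim : ∀ T ∈ Subgroup.closure 𝒯, T '' P = P := by
    intro T hT
    ext y
    constructor
    · rintro ⟨x, hx, rfl⟩; exact (hTP T hT x).2 hx
    · intro hy
      refine ⟨T.symm y, ?_, T.apply_symm_apply y⟩
      have := hTP T hT (T.symm y)
      rw [T.apply_symm_apply] at this
      exact this.1 hy
  have hText : ∀ T ∈ Subgroup.closure 𝒯, T '' Set.extremePoints ℝ P = Set.extremePoints ℝ P := by
    intro T hT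
    rw [image_extremePoints T P, hTPim T hT]
  -- Part 1
  have part1 : IsGreatest (norm '' Set.extremePoints ℝ P) lam := by
    constructor
    · exact Set.image_mono Set.inter_subset_right hlam.1
    · rintro b ⟨x, hx, rfl⟩
      have hxU : x ∈ ⋃ T ∈ Subgroup.closure 𝒯,
          (T : EuclideanSpace ℝ (Fin n) ≃ₗᵢ[ℝ] EuclideanSpace ℝ (Fin n)) '' C := by rw [hC]; trivial
      rw [Set.mem_iUnion₂] at hxU
      obtain ⟨T, hT, c, hc, hTc⟩ := hxU
      have hT' : T⁻¹ ∈ Subgroup.closure 𝒯 := inv_mem hT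
      have hcext : T.symm x ∈ Set.extremePoints ℝ P := by
        have hmem' : T.symm x ∈ (T⁻¹ : EuclideanSpace ℝ (Fin n) ≃ₗᵢ[ℝ] EuclideanSpace ℝ (Fin n)) '' Set.extremePoints ℝ P := by
          rw [LinearIsometryEquiv.coe_inv]
          exact ⟨x, hx, rfl⟩
        rwa [hText _ hT'] at hmem'
      have hcC : T.symm x ∈ C := by
        have : T.symm x = c := by rw [← hTc]; simp
        rw [this]; exact hc
      have : ‖x‖ = ‖T.symm x‖ := (T.symm.norm_map x).symm
      rw [this]
      exact hlam.2 ⟨T.symm x, ⟨hcC, hcext⟩, rfl⟩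
  -- Everything in P has norm at most lam (Krein–Milman)
  have hub : ∀ x ∈ P, ‖x‖ ≤ lam := by
    have h1 : Set.extremePoints ℝ P ⊆ Metric.closedBall 0 lam := fun x hx => by
      rw [Metric.mem_closedBall, dist_zero_right]
      exact part1.2 ⟨x, hx, rfl⟩
    have h2 : P ⊆ Metric.closedBall 0 lam := by
      have hkm := closure_convexHull_extremePoints hPcompact hPconvex
      rw [← hkm]
      exact closure_minimal (convexHull_min h1 (convex_closedBall _ _)) Metric.isClosed_closedBall
    intro x hx
    have := h2 hx
    rwa [Metric.mem_closedBall, dist_zero_right] at this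
  have lam_pos : (0 : ℝ) < lam := by
    obtain ⟨a, ha⟩ := hA_ne
    have := hub a (hAP ha)
    rw [hnorm1 a ha] at this
    linarith
  -- the witness point of maximal norm
  obtain ⟨xs, ⟨hxsC, hxsext⟩, hxsn⟩ := hlam.1
  have hxsP : xs ∈ P := extremePoints_subset hxsext
  set u₀ : EuclideanSpace ℝ (Fin n) := lam⁻¹ • xs with hu₀def
  have hu₀ : u₀ ∈ Metric.sphere (0 : EuclideanSpace ℝ (Fin n)) 1 := by
    rw [mem_sphere_zero_iff_norm, hu₀def, norm_smul, Real.norm_eq_abs,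
      abs_of_pos (inv_pos.2 lam_pos), hxsn, inv_mul_cancel₀ lam_pos.ne']
  have hu₀a : ∀ a ∈ A, ⟪u₀, a⟫ ≤ lam⁻¹ := by
    intro a ha
    rw [hu₀def, real_inner_smul_left]
    have h1 : ⟪xs, a⟫ ≤ 1 := (hmem xs).1 hxsP a ha
    exact mul_le_of_le_one_right (inv_pos.2 lam_pos).le h1
  -- every unit vector sees some a ∈ A with inner product ≥ lam⁻¹
  have hcov_ineq : ∀ x ∈ Metric.sphere (0 : EuclideanSpace ℝ (Fin n)) 1, ∃ a ∈ A, lam⁻¹ ≤ ⟪x, a⟫ := by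
    intro x hxs
    have hxnorm : ‖x‖ = 1 := mem_sphere_zero_iff_norm.1 hxs
    obtain ⟨a, haA, hmax⟩ := Set.exists_max_image A (fun a => ⟪x, a⟫) hA hA_ne
    have hpos : 0 < ⟪x, a⟫ := by
      by_contra hneg
      push_neg at hneg
      have hsub : K ⊆ {y : EuclideanSpace ℝ (Fin n) | ⟪x, y⟫ ≤ 0} :=
        convexHull_min (fun b hb => le_trans (hmax b hb) hneg)
          (convex_halfSpace_le (isLinearMap_inner_right x) 0)
      have hy : (ε / 2) • x ∈ K := by
        apply hball
        rw [Metric.mem_ball, dist_zero_right, norm_smul, Real.norm_eq_abs,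
          abs_of_pos (by positivity : (0:ℝ) < ε / 2), hxnorm]
        linarith
      have := hsub hy
      rw [Set.mem_setOf_eq, real_inner_smul_right, real_inner_self_eq_norm_sq, hxnorm] at this
      nlinarith
    refine ⟨a, haA, ?_⟩
    have hmemP : ⟪x, a⟫⁻¹ • x ∈ P := (hmem _).2 fun b hb => by
      rw [real_inner_smul_left]
      calc ⟪x, a⟫⁻¹ * ⟪x, b⟫ ≤ ⟪x, a⟫⁻¹ * ⟪x, a⟫ :=
            mul_le_mul_of_nonneg_left (hmax b hb) (inv_pos.2 hpos).le
      _ = 1 := inv_mul_cancel₀ hpos.ne'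
    have hle := hub _ hmemP
    rw [norm_smul, Real.norm_eq_abs, abs_of_pos (inv_pos.2 hpos), hxnorm, mul_one] at hle
    calc lam⁻¹ ≤ (⟪x, a⟫⁻¹)⁻¹ := by
          exact inv_anti₀ (inv_pos.2 hpos) hle
    _ = ⟪x, a⟫ := inv_inv _
  -- compute the covering radius
  set ρ := Real.arccos lam⁻¹ with hρdef
  have hρ0 : 0 ≤ ρ := Real.arccos_nonneg _
  have hCovρ : ∀ r, ρ ≤ r → Covers A r := by
    intro r hr x hxs
    obtain ⟨a, ha, hge⟩ := hcov_ineq x hxs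
    exact ⟨a, ha, le_trans (arccos_antitone' hge) hr⟩
  have hS_ne : Set.Nonempty {r : ℝ | 0 < r ∧ Covers A r} :=
    ⟨ρ + 1, ⟨by linarith, hCovρ _ (by linarith)⟩⟩
  have hbdd : BddBelow {r : ℝ | 0 < r ∧ Covers A r} := ⟨0, fun r hr => hr.1.le⟩
  have hlb : ρ ≤ sInf {r : ℝ | 0 < r ∧ Covers A r} := by
    apply le_csInf hS_ne
    rintro r ⟨hr0, hrc⟩
    obtain ⟨a, haA, har⟩ := hrc u₀ hu₀
    have := arccos_antitone' (hu₀a a haA)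
    linarith
  have hub' : sInf {r : ℝ | 0 < r ∧ Covers A r} ≤ ρ := by
    refine le_of_forall_pos_le_add fun δ hδ => ?_
    have hmem' : ρ + δ ∈ {r : ℝ | 0 < r ∧ Covers A r} :=
      ⟨by linarith, hCovρ _ (by linarith)⟩
    exact csInf_le hbdd hmem'
  exact ⟨part1, le_antisymm hub' hlb⟩
end
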